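/- With the quasi-equivalence relation ∼ as above, the multiplication of M descends to the quotient: if x ∼ x' and y ∼ y' then x·y ∼ x'·y'. Hence the quotient M/∼ is a commutative monoid. -/

import Mathlib

theorem quasi_equivalence_mul_compat_general {M : Type*} [CommMonoid M]
    (bar : M → M) (hbar_mul : ∀ x y, bar (x * y) = bar x * bar y)
    (C : Set M)
    (hC_mul : ∀ c ∈ C, ∀ c' ∈ C, c * c' ∈ C)
    (r : M → M → Prop)
    (hr : ∀ x y, r x y ↔ ∃ d ∈ C, ∃ d' ∈ C, x * d * bar d = y * d' * bar d')
    (x x' y y' : M) (hx : r x x') (hy : r y y') :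
    r (x * y) (x' * y') := by
  have norm_mul : ∀ a b d e : M,
      a * b * (d * e) * bar (d * e) = (a * d * bar d) * (b * e * bar e) := by
    intro a b d e
    rw [hbar_mul]
    ac_rfl
  rw [hr] at hx hy ⊢
  obtain ⟨d, hd, d', hd', hxd⟩ := hx
  obtain ⟨e, he, e', he', hye⟩ := hy
  refine ⟨d * e, hC_mul d hd e he, d' * e', hC_mul d' hd' e' he', ?_⟩
  rw [norm_mul, norm_mul, hxd, hye]

/-- The multiplication of a commutative monoid descends to the quotient by the
quasi-equivalence relation: if `x ∼ x'` and `y ∼ y'` then `x·y ∼ x'·y'`. -/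
theorem quasi_equivalence_mul_compat {M : Type*} [CommMonoid M]
    (bar : M → M) (hbar_mul : ∀ x y, bar (x * y) = bar x * bar y)
    (hbar_invol : ∀ x, bar (bar x) = x)
    (C : Set M) (hC_one : (1 : M) ∈ C)
    (hC_bar : ∀ c ∈ C, bar c ∈ C)
    (hC_mul : ∀ c ∈ C, ∀ c' ∈ C, c * c' ∈ C)
    (r : M → M → Prop)
    (hr : ∀ x y, r x y ↔ ∃ d ∈ C, ∃ d' ∈ C, x * d * bar d = y * d' * bar d')
    (x x' y y' : M) (hx : r x x') (hy : r y y') :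
    r (x * y) (x' * y') :=
  quasi_equivalence_mul_compat_general bar hbar_mul C hC_mul r hr x x' y y' hx hy
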